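/- For p, q ∈ Q⁰_λ, we have p ≤⁰ q (i.e., fil(p) ⊆ fil(q)) if and only if there is ε < λ such that for all α ∈ C^q ∖ ε and all A ∈ d^q_α there exists β ∈ C^p with A ∩ Z^p_β ∈ d^p_β. -/

import Mathlib

open Set

noncomputable section

def IsUltrafilterOn {α : Type*} (Z : Set α) (d : Set (Set α)) : Prop :=
  (∀ A ∈ d, A ⊆ Z) ∧ Z ∈ d ∧ ∅ ∉ d ∧
  (∀ A B : Set α, A ∈ d → A ⊆ B → B ⊆ Z → B ∈ d) ∧
  (∀ A B : Set α, A ∈ d → B ∈ d → A ∩ B ∈ d) ∧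
  (∀ A : Set α, A ⊆ Z → (A ∈ d ∨ Z \ A ∈ d))

def IsNonprincipalOn {α : Type*} (Z : Set α) (d : Set (Set α)) : Prop :=
  IsUltrafilterOn Z d ∧ ∀ x : α, {x} ∉ d

def IsClubIn (C : Set Ordinal) (lam : Ordinal) : Prop :=
  C ⊆ Iio lam ∧ (∀ β < lam, ∃ δ ∈ C, β < δ) ∧
  (∀ β < lam, β ≠ 0 → sSup (C ∩ Iio β) = β → β ∈ C)

def nextIn (C : Set Ordinal) (δ : Ordinal) : Ordinal := sInf (C \ Iic δ)

/-- An element of `Q⁰_λ`: a club `C` of limit ordinals below `λ`, together with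
a non-principal ultrafilter `d δ` on the interval `Z_δ = [δ, min(C ∖ (δ+1)))` for each `δ ∈ C`. -/
structure QZero (lam : Ordinal) where
  C : Set Ordinal
  d : Ordinal → Set (Set Ordinal)
  club : IsClubIn C lam
  limit : ∀ δ ∈ C, Order.IsSuccLimit δ
  ultra : ∀ δ ∈ C, IsNonprincipalOn (Ico δ (nextIn C δ)) (d δ)

def QZero.Z {lam : Ordinal} (p : QZero lam) (δ : Ordinal) : Set Ordinal :=
  Ico δ (nextIn p.C δ)

def fil {lam : Ordinal} (p : QZero lam) : Set (Set Ordinal) :=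
  {A | A ⊆ Iio lam ∧ ∃ ε < lam, ∀ δ ∈ p.C, ε ≤ δ → A ∩ p.Z δ ∈ p.d δ}

def le0 {lam : Ordinal} (p q : QZero lam) : Prop := fil p ⊆ fil q

def filG {lam : Ordinal} (G : Set (QZero lam)) : Set (Set Ordinal) :=
  ⋃ p ∈ G, fil p

/-!
Backward direction: if `A ∈ fil p` but `A ∩ Z^q_α ∉ d^q_α` for a large `α ∈ C^q`, then
`Z^q_α ∖ A ∈ d^q_α`, so `(Z^q_α ∖ A) ∩ Z^p_β ∈ d^p_β` for some `β`. This block `Z^p_β` lies above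
the threshold witnessing `A ∈ fil p`, so `A ∩ Z^p_β ∈ d^p_β` as well, and the two sets are disjoint.

Forward direction: a failure of the condition gives, for every `ε < λ`, some `f ε ≥ ε` in `C^q` and
`A ε ∈ d^q_{f ε}` which is `d^p_β`-null for every `β ∈ C^p`. Let `h ε` be the second point of `C^p`
after the end of the block `Z^q_{f ε}`. Since `λ` is regular uncountable, the ordinals `γ < λ` closed
under `h` are unbounded, and for two of them `γ < γ'` every `p`-block meeting `A γ` ends below
`h γ < γ' ≤ f γ'`, hence misses `A γ'`. So each `p`-block meets at most one of these `A γ`, and the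
complement of their union is in `fil p`; but it misses `A γ ∈ d^q_{f γ}` for unboundedly many `γ`,
so it is not in `fil q`.
-/

open Cardinal

namespace IsUltrafilterOn

variable {α : Type*} {Z : Set α} {d : Set (Set α)}

theorem nonempty_of_mem (hd : IsUltrafilterOn Z d) {A : Set α} (hA : A ∈ d) : A.Nonempty :=
  nonempty_iff_ne_empty.2 fun h => hd.2.2.1 (h ▸ hA)

theorem not_disjoint (hd : IsUltrafilterOn Z d) {A B : Set α} (hA : A ∈ d) (hB : B ∈ d) :
    ¬Disjoint A B := fun h => hd.2.2.1 (h.inter_eq ▸ hd.2.2.2.2.1 A B hA hB)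

theorem diff_mem_of_inter_notMem (hd : IsUltrafilterOn Z d) {A : Set α} (hA : A ∩ Z ∉ d) :
    Z \ A ∈ d := by
  rw [← sdiff_inter_self_eq_sdiff]
  exact (hd.2.2.2.2.2 _ inter_subset_right).resolve_left hA

end IsUltrafilterOn

theorem nextIn_le_of_lt {C : Set Ordinal} {δ γ : Ordinal} (hγ : γ ∈ C) (h : δ < γ) :
    nextIn C δ ≤ γ :=
  csInf_le' ⟨hγ, not_le.2 h⟩

namespace IsClubIn

variable {C : Set Ordinal} {lam δ δ' : Ordinal}

theorem nextIn_mem (hC : IsClubIn C lam) (hδ : δ < lam) : nextIn C δ ∈ C ∧ δ < nextIn C δ := by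
  obtain ⟨γ, hγC, hγ⟩ := hC.2.1 δ hδ
  have h := csInf_mem (s := C \ Iic δ) ⟨γ, hγC, not_le.2 hγ⟩
  exact ⟨h.1, not_le.1 h.2⟩

theorem nextIn_lt (hC : IsClubIn C lam) (hδ : δ < lam) : nextIn C δ < lam :=
  hC.1 (hC.nextIn_mem hδ).1

theorem nextIn_mono (hC : IsClubIn C lam) (h : δ ≤ δ') (hδ' : δ' < lam) :
    nextIn C δ ≤ nextIn C δ' :=
  nextIn_le_of_lt (hC.nextIn_mem hδ').1 (h.trans_lt (hC.nextIn_mem hδ').2)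

theorem le_of_nextIn_lt_nextIn (hC : IsClubIn C lam) (hδ : δ < lam)
    (h : nextIn C δ < nextIn C δ') : δ ≤ δ' :=
  le_of_not_gt fun h' => (hC.nextIn_mono h'.le hδ).not_gt h

end IsClubIn

theorem Cardinal.IsRegular.exists_mapsTo_Iio {κ : Cardinal} (hreg : κ.IsRegular) (hunc : ℵ₀ < κ)
    {h : Ordinal → Ordinal} (hh : ∀ ε < κ.ord, h ε < κ.ord) {a : Ordinal} (ha : a < κ.ord) :
    ∃ γ, a < γ ∧ γ < κ.ord ∧ MapsTo h (Iio γ) (Iio γ) := by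
  let F : Ordinal → Ordinal := fun x => ⨆ i : Iio x, (h i + 1)
  have hF : ∀ x < κ.ord, F x < κ.ord := fun x hx =>
    Ordinal.lift_iSup_add_one_lt_of_lt_cof
      (by rwa [← Ordinal.lift_cof, hreg.cof_ord, mk_Iio_ordinal, lift_lift, lift_lt, ← lt_ord])
      (fun i => hh i (i.2.trans hx))
  refine ⟨Ordinal.nfp F (Order.succ a), (Order.lt_succ a).trans_le (Ordinal.le_nfp _ _),
    nfp_lt_ord_of_isRegular hreg hunc.ne' hF ((isSuccLimit_ord hreg.aleph0_le).succ_lt ha),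
    fun ε hε => ?_⟩
  obtain ⟨n, hn⟩ := Ordinal.lt_nfp_iff.mp hε
  calc h ε < h ε + 1 := lt_add_one _
    _ ≤ F (F^[n] (Order.succ a)) := Ordinal.le_iSup (fun i : Iio _ => h i + 1) ⟨ε, hn⟩
    _ = F^[n + 1] (Order.succ a) := (Function.iterate_succ_apply' F n _).symm
    _ ≤ Ordinal.nfp F (Order.succ a) := Ordinal.iterate_le_nfp F _ _

namespace QZero

variable {lam : Ordinal}

theorem Z_subset_Iio (p : QZero lam) {δ : Ordinal} (hδ : δ ∈ p.C) : p.Z δ ⊆ Iio lam :=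
  fun _ hx => hx.2.trans (p.club.nextIn_lt (p.club.1 hδ))

theorem Z_subset_Iio_nextIn_nextIn (p q : QZero lam) {a δ : Ordinal} (ha : a < lam)
    (hne : (q.Z a ∩ p.Z δ).Nonempty) : p.Z δ ⊆ Iio (nextIn p.C (nextIn q.C a)) := by
  obtain ⟨x, hxq, hxp⟩ := hne
  exact fun y hy => hy.2.trans_le
    (p.club.nextIn_mono (hxp.1.trans_lt hxq.2).le (q.club.nextIn_lt ha))

theorem Iio_diff_biUnion_mem_fil (p : QZero lam) (hlam : 0 < lam) {ι : Type*} {D : Set ι}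
    {A : ι → Set Ordinal} (hnull : ∀ i ∈ D, ∀ δ ∈ p.C, A i ∩ p.Z δ ∉ p.d δ)
    (hsep : ∀ δ ∈ p.C, ∀ i ∈ D, ∀ j ∈ D,
      (A i ∩ p.Z δ).Nonempty → (A j ∩ p.Z δ).Nonempty → i = j) :
    Iio lam \ ⋃ i ∈ D, A i ∈ fil p := by
  refine ⟨sdiff_subset, 0, hlam, fun δ hδ _ => ?_⟩
  have hd := (p.ultra δ hδ).1
  obtain ⟨B, hB, hUB⟩ : ∃ B, B ∩ p.Z δ ∉ p.d δ ∧ (⋃ i ∈ D, A i) ∩ p.Z δ ⊆ B := by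
    by_cases hmeet : ∃ i ∈ D, (A i ∩ p.Z δ).Nonempty
    · obtain ⟨i, hi, hne⟩ := hmeet
      refine ⟨A i, hnull i hi δ hδ, fun x ⟨hxU, hxZ⟩ => ?_⟩
      obtain ⟨j, hj, hxj⟩ := mem_iUnion₂.1 hxU
      rwa [hsep δ hδ i hi j hj hne ⟨x, hxj, hxZ⟩]
    · refine ⟨∅, by simpa using hd.2.2.1, fun x ⟨hxU, hxZ⟩ => ?_⟩
      obtain ⟨j, hj, hxj⟩ := mem_iUnion₂.1 hxU
      exact hmeet ⟨j, hj, x, hxj, hxZ⟩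
  refine hd.2.2.2.1 _ _ (hd.diff_mem_of_inter_notMem hB) (fun x hx => ?_) inter_subset_right
  exact ⟨⟨p.Z_subset_Iio hδ hx.1, fun hxU => hx.2 (hUB ⟨hxU, hx.1⟩)⟩, hx.1⟩

end QZero

theorem le0_of_forall_mem_d {lam ε : Ordinal} {p q : QZero lam} (hε : ε < lam)
    (h : ∀ α ∈ q.C, ε ≤ α → ∀ A ∈ q.d α, ∃ β ∈ p.C, A ∩ p.Z β ∈ p.d β) : le0 p q := by
  rintro A ⟨hAsub, ε₁, hε₁, hA⟩
  refine ⟨hAsub, max ε (nextIn p.C ε₁), max_lt hε (p.club.nextIn_lt hε₁), fun α hα hεα => ?_⟩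
  by_contra hnot
  obtain ⟨β, hβ, hBβ⟩ := h α hα ((le_max_left _ _).trans hεα) _
    ((q.ultra α hα).1.diff_mem_of_inter_notMem hnot)
  have hdp := (p.ultra β hβ).1
  obtain ⟨x, ⟨hxα, -⟩, hxβ⟩ := hdp.nonempty_of_mem hBβ
  have hε₁β : ε₁ ≤ β := p.club.le_of_nextIn_lt_nextIn hε₁ <|
    calc nextIn p.C ε₁ ≤ α := (le_max_right _ _).trans hεα
      _ ≤ x := hxα.1
      _ < nextIn p.C β := hxβ.2
  exact hdp.not_disjoint (hA β hβ hε₁β) hBβ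
    (disjoint_sdiff_right.mono inter_subset_left inter_subset_left)

theorem exists_forall_mem_d_of_le0 {κ : Cardinal} (hreg : κ.IsRegular) (hunc : ℵ₀ < κ)
    {p q : QZero κ.ord} (hle : le0 p q) :
    ∃ ε < κ.ord, ∀ α ∈ q.C, ε ≤ α → ∀ A ∈ q.d α, ∃ β ∈ p.C, A ∩ p.Z β ∈ p.d β := by
  by_contra! hno
  choose! f hfC hfge A hAd hAnull using hno
  have hAZ : ∀ ε < κ.ord, A ε ⊆ q.Z (f ε) := fun ε hε => (q.ultra _ (hfC ε hε)).1.1 _ (hAd ε hε)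
  let h : Ordinal → Ordinal := fun ε => nextIn p.C (nextIn q.C (f ε))
  have hh : ∀ ε < κ.ord, h ε < κ.ord :=
    fun ε hε => p.club.nextIn_lt (q.club.nextIn_lt (q.club.1 (hfC ε hε)))
  let D := {γ | γ < κ.ord ∧ MapsTo h (Iio γ) (Iio γ)}
  have hmiss : ∀ δ, ∀ γ < κ.ord, ∀ γ' ∈ D, γ < γ' →
      (A γ ∩ p.Z δ).Nonempty → (A γ' ∩ p.Z δ).Nonempty → False := by
    rintro δ γ hγ γ' ⟨hγ', hγ'h⟩ hlt ⟨x, hxA, hxZ⟩ ⟨y, hyA, hyZ⟩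
    have hy : y < h γ := p.Z_subset_Iio_nextIn_nextIn q (q.club.1 (hfC γ hγ))
      ⟨x, hAZ γ hγ hxA, hxZ⟩ hyZ
    exact (calc γ' ≤ f γ' := hfge γ' hγ'
      _ ≤ y := (hAZ γ' hγ' hyA).1
      _ < h γ := hy
      _ < γ' := hγ'h hlt).false
  have hsep : ∀ δ ∈ p.C, ∀ γ ∈ D, ∀ γ' ∈ D,
      (A γ ∩ p.Z δ).Nonempty → (A γ' ∩ p.Z δ).Nonempty → γ = γ' := by
    intro δ _ γ hγ γ' hγ' hne hne'
    exact le_antisymm (not_lt.1 fun hgt => hmiss δ γ' hγ'.1 γ hγ hgt hne' hne)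
      (not_lt.1 fun hlt => hmiss δ γ hγ.1 γ' hγ' hlt hne hne')
  have hX := p.Iio_diff_biUnion_mem_fil (ord_pos.2 hreg.pos)
    (fun γ hγ δ hδ => hAnull γ hγ.1 δ hδ) hsep
  obtain ⟨-, ε, hε, hXq⟩ := hle hX
  obtain ⟨γ, hεγ, hγ, hγh⟩ := hreg.exists_mapsTo_Iio hunc hh hε
  refine (q.ultra _ (hfC γ hγ)).1.not_disjoint (hXq _ (hfC γ hγ) (hεγ.le.trans (hfge γ hγ)))
    (hAd γ hγ) ?_
  have hγD : γ ∈ D := ⟨hγ, hγh⟩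
  exact (disjoint_sdiff_left.mono_right (subset_biUnion_of_mem (u := A) hγD)).mono_left
    inter_subset_left

/-- `p ≤⁰ q` iff there is `ε < λ` such that for all `α ∈ C^q ∖ ε` and all `A ∈ d^q_α`
there exists `β ∈ C^p` with `A ∩ Z^p_β ∈ d^p_β`. -/
theorem statement3 (κ : Cardinal) (hreg : κ.IsRegular) (hunc : Cardinal.aleph0 < κ)
    (p q : QZero κ.ord) :
    le0 p q ↔
      ∃ ε < κ.ord, ∀ α ∈ q.C, ε ≤ α → ∀ A ∈ q.d α, ∃ β ∈ p.C, A ∩ p.Z β ∈ p.d β :=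
  ⟨exists_forall_mem_d_of_le0 hreg hunc, fun ⟨_, hε, h⟩ => le0_of_forall_mem_d hε h⟩
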